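/- Let 𝒯_𝕊 denote the set of all rooted trees with a given outdegree sequence 𝕊. The maximum rank over all trees in 𝒯_𝕊 and all their vertices is achieved at the root of some such tree: for every T ∈ 𝒯_𝕊 and every vertex v of T, there exists T' ∈ 𝒯_𝕊 with root r' such that R_{T'}(r') ≥ R_T(v). -/

import Mathlib

/-!
Induct on the depth of the vertex. If it lies in the child `t` of the root of `T`, replace `t`
by a tree `t'` with the same outdegree sequence whose root rank is at least that of the vertex.
Now detach `t'` from the root, give the root an extra leaf child in its place, and graft the
resulting tree onto a leaf of `t'`. The grafted-over leaf and the new leaf cancel in the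
outdegree sequence, and grafting onto a leaf never lowers the rank, so `t'` with the rest of
`T` hanging below it is the required tree.
-/

/-- Rooted trees: a root together with a (possibly empty) list of subtrees. -/
inductive RTree : Type
  | node : List RTree → RTree

namespace RTree

mutual
  /-- The rank (protection number) of the root of a rooted tree: the minimum
  distance from the root to a leaf descendant.  Leaves have rank `0`. -/
  def rank : RTree → ℕ
    | .node [] => 0
    | .node (t :: ts) => minRankAux t ts + 1
  termination_by t => sizeOf t
  decreasing_by
    all_goals simp_wf
    all_goals omega
  /-- Minimum of the ranks of `t :: ts`. -/
  def minRankAux : RTree → List RTree → ℕ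
    | t, [] => rank t
    | t, s :: ts => min (rank t) (minRankAux s ts)
  termination_by t ts => sizeOf t + sizeOf ts
  decreasing_by
    all_goals simp_wf
    all_goals omega
end

mutual
  /-- The order of a rooted tree: its number of vertices. -/
  def order : RTree → ℕ
    | .node ts => orderList ts + 1
  def orderList : List RTree → ℕ
    | [] => 0
    | t :: ts => order t + orderList ts
end

mutual
  /-- The security of a rooted tree: the sum of the ranks of all of its vertices. -/
  def security : RTree → ℕ
    | .node ts => rank (.node ts) + securityList ts
  def securityList : List RTree → ℕ
    | [] => 0
    | t :: ts => security t + securityList ts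
end

mutual
  /-- The height of a rooted tree: the maximum distance from the root to a leaf. -/
  def height : RTree → ℕ
    | .node [] => 0
    | .node (t :: ts) => maxHeightAux t ts + 1
  termination_by t => sizeOf t
  decreasing_by
    all_goals simp_wf
    all_goals omega
  def maxHeightAux : RTree → List RTree → ℕ
    | t, [] => height t
    | t, s :: ts => max (height t) (maxHeightAux s ts)
  termination_by t ts => sizeOf t + sizeOf ts
  decreasing_by
    all_goals simp_wf
    all_goals omega
end

mutual
  /-- The outdegree sequence of a rooted tree: the multiset of the numbers of
  children of all of its vertices. -/
  def degSeq : RTree → Multiset ℕ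
    | .node ts => ts.length ::ₘ degSeqList ts
  def degSeqList : List RTree → Multiset ℕ
    | [] => 0
    | t :: ts => degSeq t + degSeqList ts
end

/-- The subtree of `T` rooted at the vertex with position `p` (a list of child
indices, read from the root), if such a vertex exists.  The vertices of `T` are
exactly the valid positions; the rank of a vertex in `T` equals the rank (of the
root) of the subtree of `T` rooted at that vertex. -/
def subtreeAt : List ℕ → RTree → Option RTree
  | [], t => some t
  | i :: is, .node ts => (ts[i]?).bind (subtreeAt is)

/-- A rooted path whose root is an end vertex: every vertex has at most one child. -/
def IsPath : RTree → Prop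
  | .node [] => True
  | .node [t] => IsPath t
  | .node (_ :: _ :: _) => False

/-- A `k`-ary tree: every vertex has at most `k` children. -/
def IsKary (k : ℕ) (T : RTree) : Prop :=
  ∀ p ts, subtreeAt p T = some (.node ts) → ts.length ≤ k

/-- The rooted path with `n` edges (`n + 1` vertices). -/
def pathTree : ℕ → RTree
  | 0 => .node []
  | n + 1 => .node [pathTree n]

/-- The starlike tree `S(ℓ₁, …, ℓ_k)`: paths of lengths `ℓ₁, …, ℓ_k` with one end vertex
of each identified to a single vertex, the root. -/
def starlike (ls : List ℕ) : RTree := .node (ls.map (fun l => pathTree (l - 1)))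

/-- A rooted complete `k`-ary tree: every non-leaf vertex has exactly `k` children, all
leaves lie on at most two consecutive levels, and at most one vertex has both leaf and
non-leaf children. -/
def IsCompleteKary (k : ℕ) (T : RTree) : Prop :=
  (∀ p ts, subtreeAt p T = some (.node ts) → ts = [] ∨ ts.length = k) ∧
  T.height ≤ T.rank + 1 ∧
  (∀ p q ts us, subtreeAt p T = some (.node ts) → subtreeAt q T = some (.node us) →
    (∃ c ∈ ts, c = RTree.node []) → (∃ c ∈ ts, c ≠ RTree.node []) →
    (∃ c ∈ us, c = RTree.node []) → (∃ c ∈ us, c ≠ RTree.node []) → p = q)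

def graftLeftmost (u : RTree) : RTree → RTree
  | .node [] => u
  | .node (t :: ts) => .node (graftLeftmost u t :: ts)

theorem degSeqList_eq_sum (ts : List RTree) : degSeqList ts = (ts.map degSeq).sum := by
  induction ts with
  | nil => rfl
  | cons t ts ih => simp [degSeqList, ih]

theorem degSeqList_middle (s₁ s₂ : List RTree) (t : RTree) :
    degSeqList (s₁ ++ t :: s₂) = degSeq t + degSeqList (s₁ ++ s₂) := by
  simp only [degSeqList_eq_sum, ((List.perm_middle).map degSeq).sum_eq, List.map_cons,
    List.sum_cons]

theorem degSeq_graftLeftmost (u : RTree) :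
    ∀ t, degSeq (graftLeftmost u t) + {0} = degSeq u + degSeq t
  | .node [] => by simp [graftLeftmost, degSeq, degSeqList]
  | .node (t :: ts) => by
    have ih := degSeq_graftLeftmost u t
    simp only [graftLeftmost, degSeq, degSeqList, List.length_cons, Multiset.cons_add]
    rw [add_right_comm, ih, add_assoc, Multiset.add_cons]

theorem minRankAux_mono_left {t t' : RTree} (h : rank t ≤ rank t') (ts : List RTree) :
    minRankAux t ts ≤ minRankAux t' ts := by
  cases ts with
  | nil => simpa [minRankAux] using h
  | cons s ss => simpa [minRankAux] using Or.inl h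

theorem rank_le_rank_graftLeftmost (u : RTree) : ∀ t, rank t ≤ rank (graftLeftmost u t)
  | .node [] => by simp [rank]
  | .node (t :: ts) => by
    simpa [graftLeftmost, rank] using minRankAux_mono_left (rank_le_rank_graftLeftmost u t) ts

theorem degSeq_graftLeftmost_detach {s₁ s₂ : List RTree} {t t' : RTree}
    (h : degSeq t' = degSeq t) :
    degSeq (graftLeftmost (.node (.node [] :: (s₁ ++ s₂))) t') =
      degSeq (.node (s₁ ++ t :: s₂)) := by
  refine add_right_cancel (b := {0}) ?_
  rw [degSeq_graftLeftmost, h]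
  simp only [degSeq, degSeqList, degSeqList_middle, List.length_cons, List.length_append,
    List.length_nil, Multiset.cons_zero, Multiset.singleton_add, Multiset.cons_add]
  rw [Nat.add_assoc, add_comm (degSeq t), add_comm _ {0}, Multiset.singleton_add]

end RTree

open RTree in
/-- The maximum rank over all rooted trees with a given outdegree sequence and all their
vertices is achieved at the root of some such tree: for every rooted tree `T` and every
vertex of `T` (a position `p`, whose subtree is `S`, so that the rank of that vertex is
`S.rank`), there is a rooted tree `T'` with the same outdegree sequence as `T` whose root
has rank at least as large. -/
theorem max_rank_at_root_degSeq (T : RTree) (p : List ℕ) (S : RTree)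
    (hS : subtreeAt p T = some S) :
    ∃ T' : RTree, T'.degSeq = T.degSeq ∧ S.rank ≤ T'.rank := by
  induction p generalizing T S with
  | nil =>
    cases hS
    exact ⟨T, rfl, le_rfl⟩
  | cons i is ih =>
    obtain ⟨ts⟩ := T
    obtain ⟨t, ht, hS⟩ := Option.bind_eq_some_iff.mp hS
    obtain ⟨t', hdeg, hrank⟩ := ih t S hS
    obtain ⟨s₁, s₂, rfl⟩ := List.append_of_mem (List.mem_of_getElem? ht)
    exact ⟨_, degSeq_graftLeftmost_detach hdeg, hrank.trans (rank_le_rank_graftLeftmost _ t')⟩
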